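/- arXiv:1511.01601 — 5 statements merged into one kernel-verified Lean document; each statement's English description precedes it below -/
import Mathlib

section
/- Let j ≥ 1 and 2^j ≤ m < 2^{j+1}. Then the largest integer i with 0 ≤ i ≤ m such that the binomial coefficient C(m+i, m) is odd equals 2^{j+1} − m − 1. -/
/-!
By Lucas's theorem for `p = 2`, `C(a + b, b)` is odd exactly when adding `a` and `b` in binary
produces no carry. Hence if `C(m + i, m)` is odd then `m + i` has no more binary digits than `m`,
so `m + i < 2 ^ (j + 1)`. Conversely `C(2 ^ (j + 1) - 1, m)` is odd because every digit of
`2 ^ (j + 1) - 1` is `1`, and `2 ^ (j + 1) - 1 - m ≤ m` because `2 ^ j ≤ m`.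
-/

namespace Nat

theorem odd_choose_iff_odd_choose_mod_two_and_div_two (n k : ℕ) :
    Odd (n.choose k) ↔ Odd ((n % 2).choose (k % 2)) ∧ Odd ((n / 2).choose (k / 2)) := by
  have := Fact.mk prime_two
  have lucas : n.choose k % 2 = ((n % 2).choose (k % 2) * (n / 2).choose (k / 2)) % 2 :=
    Choose.choose_modEq_choose_mod_mul_choose_div_nat
  rw [odd_iff, lucas, ← odd_iff, odd_mul]

theorem odd_choose_two_pow_sub_one {k m : ℕ} (hm : m < 2 ^ k) : Odd ((2 ^ k - 1).choose m) := by
  induction k generalizing m with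
  | zero => simp_all
  | succ k ih =>
    have hmod : (2 ^ (k + 1) - 1) % 2 = 1 := by rw [pow_succ]; omega
    have hdiv : (2 ^ (k + 1) - 1) / 2 = 2 ^ k - 1 := by rw [pow_succ]; omega
    rw [odd_choose_iff_odd_choose_mod_two_and_div_two, hmod, hdiv]
    refine ⟨?_, ih (by rw [pow_succ] at hm; omega)⟩
    rcases mod_two_eq_zero_or_one m with h | h <;> simp [h]

theorem add_lt_two_pow_of_odd_choose {a b k : ℕ} (ha : a < 2 ^ k) (hb : b < 2 ^ k)
    (hodd : Odd ((a + b).choose b)) : a + b < 2 ^ k := by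
  induction k generalizing a b with
  | zero => simp_all
  | succ k ih =>
    rw [pow_succ] at ha hb ⊢
    rw [odd_choose_iff_odd_choose_mod_two_and_div_two] at hodd
    obtain ⟨hlow, hhigh⟩ := hodd
    have no_carry : ¬(a % 2 = 1 ∧ b % 2 = 1) := by
      rintro ⟨ha1, hb1⟩
      rw [show (a + b) % 2 = 0 by omega, hb1] at hlow
      simp at hlow
    have hsum : (a + b) / 2 = a / 2 + b / 2 := by omega
    rw [hsum] at hhigh
    have := ih (by omega) (by omega) hhigh
    omega

end Nat

theorem stmt_8_general (j m : ℕ) (h1 : 2 ^ j ≤ m) (h2 : m < 2 ^ (j + 1)) :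
    IsGreatest {i : ℕ | i ≤ m ∧ Odd (Nat.choose (m + i) m)} (2 ^ (j + 1) - m - 1) := by
  have hpow : 2 ^ (j + 1) = 2 * 2 ^ j := pow_succ' 2 j
  refine ⟨⟨by omega, ?_⟩, ?_⟩
  · rw [show m + (2 ^ (j + 1) - m - 1) = 2 ^ (j + 1) - 1 by omega]
    exact Nat.odd_choose_two_pow_sub_one h2
  · rintro i ⟨him, hodd⟩
    rw [add_comm] at hodd
    have := Nat.add_lt_two_pow_of_odd_choose (by omega) h2 hodd
    omega

/-- For `j ≥ 1` and `2^j ≤ m < 2^{j+1}`, the largest `i ≤ m` with `C(m+i, m)` odd is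
`2^{j+1} - m - 1`. -/
theorem stmt_8 (j m : ℕ) (hj : 1 ≤ j) (h1 : 2 ^ j ≤ m) (h2 : m < 2 ^ (j + 1)) :
    IsGreatest {i : ℕ | i ≤ m ∧ Odd (Nat.choose (m + i) m)} (2 ^ (j + 1) - m - 1) :=
  stmt_8_general j m h1 h2
end

section
/- Let j ≥ 1 and 2^j ≤ m < 2^{j+1}. For every integer i with 2^{j+1} − m − 1 < i ≤ m, the binomial coefficient C(m+i, m) is even. -/
/-! Adding `m` and `i`, both below `2^(j+1)`, overflows into bit `j+1` since `2^(j+1) ≤ m + i`.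
This carry makes `C(m+i, m)` even by Kummer's theorem. -/

theorem Nat.Prime.dvd_choose_add_of_pow_le {p a b k : ℕ} (hp : p.Prime) (ha : a < p ^ k)
    (hb : b < p ^ k) (hab : p ^ k ≤ a + b) : p ∣ (a + b).choose a := by
  have hk : 1 ≤ k := Nat.one_le_iff_ne_zero.mpr <| by rintro rfl; rw [pow_zero] at ha hb hab; omega
  have hlog : Nat.log p (b + a) < k + 1 :=
    Nat.log_lt_of_lt_pow (by omega) <| by
      rw [pow_succ]
      nlinarith [hp.two_le]
  have hcarry : k ∈ {i ∈ Finset.Ico 1 (k + 1) | p ^ i ≤ a % p ^ i + b % p ^ i} := by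
    rw [Finset.mem_filter, Finset.mem_Ico, Nat.mod_eq_of_lt ha, Nat.mod_eq_of_lt hb]
    exact ⟨⟨hk, k.lt_succ_self⟩, hab⟩
  rw [← pow_one p]
  apply pow_dvd_of_le_emultiplicity
  rw [add_comm a b, hp.emultiplicity_choose' hlog]
  exact_mod_cast Finset.card_pos.mpr ⟨k, hcarry⟩

theorem stmt_10_general (j m : ℕ) (h2 : m < 2 ^ (j + 1)) :
    ∀ i : ℕ, 2 ^ (j + 1) - m - 1 < i → i ≤ m → Even (Nat.choose (m + i) m) := by
  intro i hi him
  rw [even_iff_two_dvd]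
  exact Nat.prime_two.dvd_choose_add_of_pow_le h2 (by omega) (by omega)

/-- For `j ≥ 1`, `2^j ≤ m < 2^{j+1}` and `2^{j+1} - m - 1 < i ≤ m`, the binomial
coefficient `C(m+i, m)` is even. -/
theorem stmt_10 (j m : ℕ) (hj : 1 ≤ j) (h1 : 2 ^ j ≤ m) (h2 : m < 2 ^ (j + 1)) :
    ∀ i : ℕ, 2 ^ (j + 1) - m - 1 < i → i ≤ m → Even (Nat.choose (m + i) m) :=
  stmt_10_general j m h2
end

section
/- In the truncated polynomial ring R = (ℤ/2)[α]/(α^{m+1}) with j ≥ 1 and 2^j ≤ m < 2^{j+1}, the element 1 + α is a unit, its inverse raised to the power m+1 equals 1 + Σ_{i=1}^{m} C(m+i, m) α^i (coefficients reduced mod 2), and the largest q with nonzero coefficient of α^q in (1+α)^{-(m+1)} is q = 2^{j+1} − m − 1. -/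
/-!
In characteristic 2 we have `1 + α = 1 - α`, and for nilpotent `a` with `a ^ (m + 1) = 0` the
truncated negative binomial series `∑_{i ≤ m} C(n + i, n) a ^ i` inverts `(1 - a) ^ (n + 1)`;
this is checked by induction on `n` using Pascal's rule.
For the top coefficient: `C(m + q, m)` is odd when `m + q = 2 ^ (j + 1) - 1`, by Lucas' theorem,
since all binary digits of `2 ^ (j + 1) - 1` are `1`. It is even when `m + q ≥ 2 ^ (j + 1)` with
`m, q < 2 ^ (j + 1)`, by Kummer's theorem, since adding `m` and `q` in binary carries into
position `j + 1`.
-/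

open Polynomial

section

open Finset

theorem one_sub_mul_sum_choose_succ {A : Type*} [CommRing A] (a : A) (n m : ℕ) :
    (1 - a) * ∑ i ∈ range (m + 1), ((n + 1 + i).choose (n + 1) : A) * a ^ i =
      ∑ i ∈ range (m + 1), ((n + i).choose n : A) * a ^ i
        - ((n + 1 + m).choose (n + 1) : A) * a ^ (m + 1) := by
  induction m with
  | zero => simp
  | succ m ih =>
    have pascal : ((n + 1 + (m + 1)).choose (n + 1) : A) =
        ((n + (m + 1)).choose n : A) + ((n + 1 + m).choose (n + 1) : A) := by
      rw [show n + 1 + (m + 1) = n + m + 1 + 1 by omega, Nat.choose_succ_succ,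
        show n + 1 + m = n + m + 1 by omega, show n + (m + 1) = n + m + 1 by omega]
      push_cast; ring
    rw [sum_range_succ _ (m + 1), mul_add, ih, sum_range_succ _ (m + 1)]
    linear_combination a ^ (m + 1) * pascal

theorem one_sub_pow_mul_sum_choose {A : Type*} [CommRing A] {a : A} {m : ℕ}
    (ha : a ^ (m + 1) = 0) (n : ℕ) :
    (1 - a) ^ (n + 1) * ∑ i ∈ range (m + 1), ((n + i).choose n : A) * a ^ i = 1 := by
  induction n with
  | zero => simpa [ha] using mul_neg_geom_sum a (m + 1)
  | succ n ih =>
    rw [pow_succ, mul_assoc, one_sub_mul_sum_choose_succ, ha, mul_zero, sub_zero, ih]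

theorem Ring.inverse_one_sub_pow {A : Type*} [CommRing A] {a : A} {m : ℕ}
    (ha : a ^ (m + 1) = 0) (n : ℕ) :
    Ring.inverse (1 - a) ^ (n + 1) = ∑ i ∈ range (m + 1), ((n + i).choose n : A) * a ^ i := by
  have hu : IsUnit ((1 - a) ^ (n + 1)) := (IsNilpotent.isUnit_one_sub ⟨_, ha⟩).pow _
  rw [Ring.inverse_pow]
  calc _ = Ring.inverse ((1 - a) ^ (n + 1)) *
        ((1 - a) ^ (n + 1) * ∑ i ∈ range (m + 1), ((n + i).choose n : A) * a ^ i) := by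
        rw [one_sub_pow_mul_sum_choose ha, mul_one]
    _ = _ := Ring.inverse_mul_cancel_left _ _ hu

end

theorem choose_add_eq_zero_of_carry {m q t : ℕ} (hm : m < 2 ^ t) (hq : q < 2 ^ t)
    (hcarry : 2 ^ t ≤ m + q) : ((m + q).choose m : ZMod 2) = 0 := by
  have : Fact (Nat.Prime 2) := ⟨Nat.prime_two⟩
  have ht : t ≠ 0 := by rintro rfl; omega
  rw [ZMod.natCast_eq_zero_iff, add_comm]
  apply dvd_of_one_le_padicValNat
  rw [padicValNat_choose' (b := t + 1) (Nat.log_lt_of_lt_pow (by omega) (by rw [pow_succ]; omega))]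
  apply Finset.card_pos.mpr
  exact ⟨t, by simp [Nat.mod_eq_of_lt hm, Nat.mod_eq_of_lt hq]; omega⟩

theorem choose_two_pow_sub_one_eq_one (t : ℕ) {k : ℕ} (hk : k < 2 ^ t) :
    ((2 ^ t - 1).choose k : ZMod 2) = 1 := by
  have : Fact (Nat.Prime 2) := ⟨Nat.prime_two⟩
  induction t generalizing k with
  | zero => simp_all
  | succ t ih =>
    have lucas := (ZMod.intCast_eq_intCast_iff _ _ _).mpr
      (Choose.choose_modEq_choose_mod_mul_choose_div (n := 2 ^ (t + 1) - 1) (k := k) (p := 2))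
    push_cast at lucas
    rw [lucas, show (2 ^ (t + 1) - 1) / 2 = 2 ^ t - 1 by omega, ih (by omega),
      show (2 ^ (t + 1) - 1) % 2 = 1 by omega]
    rcases Nat.mod_two_eq_zero_or_one k with h | h <;> simp [h]

theorem stmt_11_general (j m : ℕ) (h1 : 2 ^ j ≤ m) (h2 : m < 2 ^ (j + 1)) :
    let R := (ZMod 2)[X] ⧸ Ideal.span {(X : (ZMod 2)[X]) ^ (m + 1)}
    let α : R := Ideal.Quotient.mk (Ideal.span {(X : (ZMod 2)[X]) ^ (m + 1)}) X
    IsUnit (1 + α) ∧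
    (Ring.inverse (1 + α)) ^ (m + 1)
      = 1 + ∑ i ∈ Finset.Icc 1 m, ((Nat.choose (m + i) m : R) * α ^ i) ∧
    IsGreatest {q : ℕ | q ≤ m ∧ (Nat.choose (m + q) m : ZMod 2) ≠ 0}
      (2 ^ (j + 1) - m - 1) := by
  intro R α
  have hα : α ^ (m + 1) = 0 := by
    rw [← map_pow, Ideal.Quotient.eq_zero_iff_mem]
    exact Ideal.mem_span_singleton_self _
  have hneg : 1 + α = 1 - α := by
    have h2 : (2 : R) = 0 := by
      rw [← map_ofNat (algebraMap (ZMod 2) R) 2, show (2 : ZMod 2) = 0 from rfl, map_zero]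
    linear_combination α * h2
  refine ⟨hneg ▸ IsNilpotent.isUnit_one_sub ⟨_, hα⟩, ?_, ⟨?_, ?_⟩⟩
  · rw [hneg, Ring.inverse_one_sub_pow hα, Finset.range_eq_Ico,
      Finset.sum_eq_sum_Ico_succ_bot (by omega : 0 < m + 1), Finset.Ico_add_one_right_eq_Icc]
    simp
  · refine ⟨by omega, ?_⟩
    rw [show m + (2 ^ (j + 1) - m - 1) = 2 ^ (j + 1) - 1 by omega,
      choose_two_pow_sub_one_eq_one _ h2]
    exact one_ne_zero
  · rintro q ⟨hqm, hodd⟩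
    by_contra! hlt
    exact hodd (choose_add_eq_zero_of_carry h2 (by omega) (by omega))

/-- In `R = (ℤ/2)[α]/(α^{m+1})` with `2^j ≤ m < 2^{j+1}`, `1 + α` is a unit, the
`(m+1)`-st power of its inverse is `1 + Σ_{i=1}^m C(m+i,m) α^i`, and the largest `q`
with nonzero coefficient of `α^q` in this expansion is `2^{j+1} - m - 1`. -/
theorem stmt_11 (j m : ℕ) (hj : 1 ≤ j) (h1 : 2 ^ j ≤ m) (h2 : m < 2 ^ (j + 1)) :
    let R := (ZMod 2)[X] ⧸ Ideal.span {(X : (ZMod 2)[X]) ^ (m + 1)}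
    let α : R := Ideal.Quotient.mk (Ideal.span {(X : (ZMod 2)[X]) ^ (m + 1)}) X
    IsUnit (1 + α) ∧
    (Ring.inverse (1 + α)) ^ (m + 1)
      = 1 + ∑ i ∈ Finset.Icc 1 m, ((Nat.choose (m + i) m : R) * α ^ i) ∧
    IsGreatest {q : ℕ | q ≤ m ∧ (Nat.choose (m + q) m : ZMod 2) ≠ 0}
      (2 ^ (j + 1) - m - 1) :=
  stmt_11_general j m h1 h2
end

section
/- For k distinct points z₁, …, z_k ∈ ℂ, the k vectors v_i = (1, Re z_i, Im z_i, Re z_i², Im z_i², …, Re z_i^{k-1}, Im z_i^{k-1}) ∈ ℝ^{2k-1} are linearly dependent over ℝ only if the complex vectors (1, z_i, …, z_i^{k-1}) are linearly dependent over ℂ; consequently the map ℂ → ℝ^{2k-1}, z ↦ (1, Re z, Im z, …, Re z^{k-1}, Im z^{k-1}) is a (real) k-regular map. -/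
/-!
The `ℝ`-linear map `(a, (xⱼ, yⱼ)ⱼ) ↦ (a, x₀ + i y₀, …)` sends `vᵢ` to the Vandermonde vector
`(1, zᵢ, …, zᵢ^{k-1})`. A family whose image under a linear map is independent is independent, and
the Vandermonde rows of distinct points are `ℂ`-independent, hence `ℝ`-independent.
-/

def complexifyCoords (n : ℕ) : ℝ × (Fin n → ℝ × ℝ) →ₗ[ℝ] Fin (n + 1) → ℂ where
  toFun p := Fin.cons (p.1 : ℂ) fun j => ⟨(p.2 j).1, (p.2 j).2⟩
  map_add' p q := by
    ext j
    refine Fin.cases ?_ (fun j => ?_) j <;> simp [Complex.ext_iff]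
  map_smul' c p := by
    ext j
    refine Fin.cases ?_ (fun j => ?_) j <;> simp [Complex.ext_iff]

theorem complexifyCoords_re_im_pow (n : ℕ) (z : ℂ) :
    complexifyCoords n (1, fun j : Fin n => ((z ^ ((j : ℕ) + 1)).re, (z ^ ((j : ℕ) + 1)).im)) =
      fun j : Fin (n + 1) => z ^ (j : ℕ) := by
  ext j
  refine Fin.cases ?_ (fun j => ?_) j <;> simp [complexifyCoords]

theorem linearIndependent_re_im_pow_of_linearIndependent_pow {ι : Type*} {n : ℕ} {z : ι → ℂ}
    (h : LinearIndependent ℂ fun i (j : Fin (n + 1)) => z i ^ (j : ℕ)) :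
    LinearIndependent ℝ fun i =>
      ((1 : ℝ), fun j : Fin n => ((z i ^ ((j : ℕ) + 1)).re, (z i ^ ((j : ℕ) + 1)).im)) := by
  refine LinearIndependent.of_comp (complexifyCoords n) ?_
  simpa only [Function.comp_def, complexifyCoords_re_im_pow] using h.restrict_scalars' ℝ

theorem linearIndependent_pow_of_injective {K : Type*} [Field K] {k : ℕ} {z : Fin k → K}
    (hz : Function.Injective z) : LinearIndependent K fun i (j : Fin k) => z i ^ (j : ℕ) :=
  Matrix.linearIndependent_rows_of_det_ne_zero (Matrix.det_vandermonde_ne_zero_iff.mpr hz)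

theorem stmt_18_general (k : ℕ) (z : Fin k → ℂ) (hz : Function.Injective z) :
    (¬ LinearIndependent ℝ (fun i : Fin k =>
        (((1 : ℝ), fun j : Fin (k - 1) =>
          ((z i ^ ((j : ℕ) + 1)).re, (z i ^ ((j : ℕ) + 1)).im)) :
          ℝ × (Fin (k - 1) → ℝ × ℝ))) →
      ¬ LinearIndependent ℂ (fun i : Fin k => fun j : Fin k => z i ^ (j : ℕ))) ∧
    LinearIndependent ℝ (fun i : Fin k =>
      (((1 : ℝ), fun j : Fin (k - 1) =>
        ((z i ^ ((j : ℕ) + 1)).re, (z i ^ ((j : ℕ) + 1)).im)) :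
        ℝ × (Fin (k - 1) → ℝ × ℝ))) := by
  cases k with
  | zero => exact ⟨fun h => (h linearIndependent_empty_type).elim, linearIndependent_empty_type⟩
  | succ n =>
    exact ⟨fun hdep hindep => hdep (linearIndependent_re_im_pow_of_linearIndependent_pow hindep),
      linearIndependent_re_im_pow_of_linearIndependent_pow (linearIndependent_pow_of_injective hz)⟩

/-- For `k` distinct complex numbers, an `ℝ`-linear dependence of the real vectors
`(1, Re zᵢ, Im zᵢ, …, Re zᵢ^{k-1}, Im zᵢ^{k-1})` would force a `ℂ`-linear dependence
of the Vandermonde vectors `(1, zᵢ, …, zᵢ^{k-1})`; consequently the map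
`z ↦ (1, Re z, Im z, …, Re z^{k-1}, Im z^{k-1})` into `ℝ^{2k-1}` is `k`-regular. -/
theorem stmt_18 (k : ℕ) (hk : 1 ≤ k) (z : Fin k → ℂ) (hz : Function.Injective z) :
    (¬ LinearIndependent ℝ (fun i : Fin k =>
        (((1 : ℝ), fun j : Fin (k - 1) =>
          ((z i ^ ((j : ℕ) + 1)).re, (z i ^ ((j : ℕ) + 1)).im)) :
          ℝ × (Fin (k - 1) → ℝ × ℝ))) →
      ¬ LinearIndependent ℂ (fun i : Fin k => fun j : Fin k => z i ^ (j : ℕ))) ∧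
    LinearIndependent ℝ (fun i : Fin k =>
      (((1 : ℝ), fun j : Fin (k - 1) =>
        ((z i ^ ((j : ℕ) + 1)).re, (z i ^ ((j : ℕ) + 1)).im)) :
        ℝ × (Fin (k - 1) → ℝ × ℝ))) :=
  stmt_18_general k z hz
end

section
/- In the ring (ℤ/2)[β]/(β^{m+1}) where j ≥ 1 and 2^j ≤ m < 2^{j+1}, the inverse of (1+β)^{m+1} equals 1 + Σ_{i=1}^{m} C(m+i, m) β^i (coefficients mod 2), and the largest q such that the coefficient of β^q in this inverse is nonzero is q = 2^{j+1} − m − 1; interpreting β as a degree-2 class, the top nonzero dual Stiefel–Whitney class of ℂP^m sits in degree 2^{j+2} − 2m − 2. -/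
/-!
Over any commutative ring, the power series identity `(1 - X)⁻⁽ᵐ⁺¹⁾ = Σ C(m+n, m) Xⁿ` truncates to
`(1 - x)^(m+1) * Σ_{i ≤ m} C(m+i, m) xⁱ = 1` as soon as `x^(m+1) = 0`, and `1 - β = 1 + β` in
characteristic 2.

For the top coefficient put `N = 2^(j+1)`. At `q = N - 1 - m` the coefficient is `C(N - 1, m)`,
which is odd because `(1 + X)^(N-1) = (1 + X^N) / (1 + X) = Σ_{k<N} X^k` mod 2. For larger `q ≤ m`
the binary addition of `m` and `q` carries into the place of `N`, so `C(m+q, m)` is even by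
Kummer's theorem.
-/

open Polynomial Finset

theorem Polynomial.X_pow_dvd_mul_trunc_sub_one {R : Type*} [CommRing R] (n : ℕ) (p : R[X])
    {f : PowerSeries R} (h : (p : PowerSeries R) * f = 1) :
    X ^ n ∣ p * PowerSeries.trunc n f - 1 := by
  rw [X_pow_dvd_iff]
  intro d hd
  rw [coeff_sub, ← coeff_coe, coe_mul, ← PowerSeries.coeff_coe_trunc_of_lt hd,
    PowerSeries.trunc_mul_trunc, h, ← Polynomial.coe_one, PowerSeries.coeff_coe_trunc_of_lt hd,
    coeff_coe, sub_self]

theorem one_sub_pow_mul_sum_choose_eq_one {R : Type*} [CommRing R] {x : R} {m : ℕ}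
    (hx : x ^ (m + 1) = 0) :
    (1 - x) ^ (m + 1) * ∑ i ∈ range (m + 1), ((m + i).choose m : R) * x ^ i = 1 := by
  have hinv : (((1 - X) ^ (m + 1) : R[X]) : PowerSeries R) *
      PowerSeries.mk (fun n ↦ ((m + n).choose m : R)) = 1 := by
    rw [mul_comm]
    simpa using PowerSeries.mk_add_choose_mul_one_sub_pow_eq_one R m
  have htrunc : eval x (PowerSeries.trunc (m + 1) (PowerSeries.mk fun n ↦ ((m + n).choose m : R)))
      = ∑ i ∈ range (m + 1), ((m + i).choose m : R) * x ^ i := by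
    simp [eval, PowerSeries.eval₂_trunc_eq_sum_range]
  obtain ⟨q, hq⟩ := X_pow_dvd_mul_trunc_sub_one (m + 1) _ hinv
  simpa [htrunc, hx, sub_eq_zero] using congrArg (eval x) hq

theorem ZMod.natCast_choose_two_pow_sub_one {n k : ℕ} (hk : k < 2 ^ n) :
    ((2 ^ n - 1).choose k : ZMod 2) = 1 := by
  have hgeom : (1 + X : (ZMod 2)[X]) ^ (2 ^ n - 1) = ∑ i ∈ range (2 ^ n), X ^ i := by
    refine mul_left_cancel₀ (a := (1 - X : (ZMod 2)[X])) ?_ ?_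
    · exact fun h ↦ by simpa [coeff_one] using congrArg (coeff · 1) h
    · rw [mul_neg_geom_sum, CharTwo.sub_eq_add, ← pow_succ', Nat.sub_add_cancel Nat.one_le_two_pow,
        add_pow_char_pow, one_pow, CharTwo.sub_eq_add]
  simpa [coeff_one_add_X_pow, finsetSum_coeff, coeff_X_pow, hk] using congrArg (coeff · k) hgeom

theorem Nat.Prime.dvd_choose_add_of_pow_le_s19 {p n m q : ℕ} (hp : p.Prime) (hm : m < p ^ n)
    (hq : q < p ^ n) (hmq : p ^ n ≤ m + q) : p ∣ (m + q).choose m := by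
  have := Fact.mk hp
  have hn : 1 ≤ n := Nat.one_le_iff_ne_zero.mpr <| by
    rintro rfl
    rw [pow_zero] at hm hq hmq
    omega
  have hlog : Nat.log p (q + m) < n + 1 :=
    Nat.log_lt_of_lt_pow (by omega) (by rw [pow_succ]; nlinarith [hp.two_le])
  have hval : 1 ≤ padicValNat p ((q + m).choose m) := by
    rw [padicValNat_choose' hlog]
    exact Finset.card_pos.mpr ⟨n, mem_filter.mpr ⟨mem_Ico.mpr ⟨hn, n.lt_succ_self⟩,
      by rwa [Nat.mod_eq_of_lt hm, Nat.mod_eq_of_lt hq]⟩⟩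
  rw [add_comm]
  exact dvd_of_one_le_padicValNat hval

theorem isGreatest_choose_add_ne_zero_zmod_two {n m : ℕ} (hm : 2 ^ n ≤ 2 * m + 1)
    (hmn : m < 2 ^ n) :
    IsGreatest {q : ℕ | q ≤ m ∧ ((m + q).choose m : ZMod 2) ≠ 0} (2 ^ n - m - 1) := by
  refine ⟨⟨by omega, ?_⟩, fun q ⟨hqm, hq⟩ ↦ ?_⟩
  · rw [show m + (2 ^ n - m - 1) = 2 ^ n - 1 by omega, ZMod.natCast_choose_two_pow_sub_one hmn]
    exact one_ne_zero
  · by_contra! hlt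
    exact hq <| (ZMod.natCast_eq_zero_iff _ 2).mpr <|
      Nat.prime_two.dvd_choose_add_of_pow_le_s19 hmn (by omega) (by omega)

theorem stmt_19_general (j m : ℕ) (h1 : 2 ^ j ≤ m) (h2 : m < 2 ^ (j + 1)) :
    let R := (ZMod 2)[X] ⧸ Ideal.span {(X : (ZMod 2)[X]) ^ (m + 1)}
    let β : R := Ideal.Quotient.mk (Ideal.span {(X : (ZMod 2)[X]) ^ (m + 1)}) X
    IsUnit ((1 + β) ^ (m + 1)) ∧
    Ring.inverse ((1 + β) ^ (m + 1))
      = 1 + ∑ i ∈ Finset.Icc 1 m, ((Nat.choose (m + i) m : R) * β ^ i) ∧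
    IsGreatest {q : ℕ | q ≤ m ∧ (Nat.choose (m + q) m : ZMod 2) ≠ 0}
      (2 ^ (j + 1) - m - 1) ∧
    2 * (2 ^ (j + 1) - m - 1) = 2 ^ (j + 2) - 2 * m - 2 := by
  intro R β
  have hβ : β ^ (m + 1) = 0 := by
    rw [← map_pow, Ideal.Quotient.eq_zero_iff_mem]
    exact Ideal.subset_span rfl
  have hneg : 1 - β = 1 + β := by
    rw [sub_eq_add_neg, ← map_neg, CharTwo.neg_eq]
  have hsum : ∑ i ∈ range (m + 1), ((m + i).choose m : R) * β ^ i
      = 1 + ∑ i ∈ Icc 1 m, ((m + i).choose m : R) * β ^ i := by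
    rw [← Nat.Ico_zero_eq_range, Ico_add_one_right_eq_Icc, Icc_eq_cons_Ioc m.zero_le, sum_cons,
      ← Icc_add_one_left_eq_Ioc]
    simp
  have hmul := one_sub_pow_mul_sum_choose_eq_one hβ
  rw [hneg, hsum] at hmul
  have hu : IsUnit ((1 + β) ^ (m + 1)) := IsUnit.of_mul_eq_one _ hmul
  refine ⟨hu, ?_, isGreatest_choose_add_ne_zero_zmod_two (by rw [pow_succ]; omega) h2,
    by rw [pow_succ 2 (j + 1)]; omega⟩
  simpa using (Ring.inverse_mul_eq_iff_eq_mul _ 1 _ hu).mpr hmul.symm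

/-- In `(ℤ/2)[β]/(β^{m+1})` with `2^j ≤ m < 2^{j+1}`, the inverse of `(1+β)^{m+1}`
equals `1 + Σ_{i=1}^m C(m+i,m) β^i`, the largest `q` with nonzero coefficient of `β^q`
is `2^{j+1} - m - 1`, and (with `β` of degree 2) the top nonzero dual Stiefel–Whitney
class of `ℂP^m` sits in degree `2^{j+2} - 2m - 2`. -/
theorem stmt_19 (j m : ℕ) (hj : 1 ≤ j) (h1 : 2 ^ j ≤ m) (h2 : m < 2 ^ (j + 1)) :
    let R := (ZMod 2)[X] ⧸ Ideal.span {(X : (ZMod 2)[X]) ^ (m + 1)}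
    let β : R := Ideal.Quotient.mk (Ideal.span {(X : (ZMod 2)[X]) ^ (m + 1)}) X
    IsUnit ((1 + β) ^ (m + 1)) ∧
    Ring.inverse ((1 + β) ^ (m + 1))
      = 1 + ∑ i ∈ Finset.Icc 1 m, ((Nat.choose (m + i) m : R) * β ^ i) ∧
    IsGreatest {q : ℕ | q ≤ m ∧ (Nat.choose (m + q) m : ZMod 2) ≠ 0}
      (2 ^ (j + 1) - m - 1) ∧
    2 * (2 ^ (j + 1) - m - 1) = 2 ^ (j + 2) - 2 * m - 2 :=
  stmt_19_general j m h1 h2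
end
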